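/- Let k be a field, A a Hopf algebra over k, and M a left Hopf module over A. Then M is free as a left A-module. -/

import Mathlib

/-!
The coinvariants `N = {m | ρ m = 1 ⊗ m}` form a `k`-vector space, so `A ⊗[k] N` is a free
`A`-module, and `a ⊗ n ↦ a • n` is an `A`-linear isomorphism `A ⊗[k] N ≃ M`. Its inverse is
`m ↦ m₍₋₁₎ ⊗ E m₍₀₎`, where `E m = S(m₍₋₁₎) • m₍₀₎` projects onto `N`. That `E` lands in `N`
comes down to the identity `∑ Δ(S a₍₁₎) (a₍₂₎ ⊗ 1) = 1 ⊗ S a` in `A ⊗ A`, which holds in the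
convolution monoid of maps `A → A ⊗ A`: `Δ = ι₁ * ι₂`, and `Δ ∘ S` is a left inverse of `Δ`
because `Δ` is multiplicative.
-/

open TensorProduct

namespace HopfAlgebra

open WithConv

variable {k A B : Type*} [CommSemiring k] [Semiring A] [HopfAlgebra k A] [Semiring B] [Algebra k B]

lemma _root_.AlgHom.comp_antipode_convMul_self (f : A →ₐ[k] B) :
    toConv (f.toLinearMap ∘ₗ antipode k) * toConv f.toLinearMap = 1 := by
  have h := LinearMap.algHom_comp_convMul_distrib f (toConv (antipode k)) (toConv LinearMap.id)
  rw [LinearMap.antipode_mul_id] at h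
  simp only [LinearMap.comp_id] at h
  apply ofConv_injective
  rw [← h]
  ext a
  simp

lemma _root_.AlgHom.self_convMul_comp_antipode (f : A →ₐ[k] B) :
    toConv f.toLinearMap * toConv (f.toLinearMap ∘ₗ antipode k) = 1 := by
  have h := LinearMap.algHom_comp_convMul_distrib f (toConv LinearMap.id) (toConv (antipode k))
  rw [LinearMap.id_mul_antipode] at h
  simp only [LinearMap.comp_id] at h
  apply ofConv_injective
  rw [← h]
  ext a
  simp

variable (k A) in
lemma toConv_comul_eq_includeLeft_convMul_includeRight :
    toConv (Coalgebra.comul (R := k) (A := A)) =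
      toConv (Algebra.TensorProduct.includeLeft (S := k)).toLinearMap *
        toConv (Algebra.TensorProduct.includeRight (R := k) (A := A)).toLinearMap := by
  have h : LinearMap.mul' k (A ⊗[k] A) ∘ₗ
      map (Algebra.TensorProduct.includeLeft (S := k)).toLinearMap
        (Algebra.TensorProduct.includeRight (R := k) (A := A)).toLinearMap = LinearMap.id :=
    TensorProduct.ext' fun x y => by simp
  ext a
  exact (LinearMap.congr_fun h (Coalgebra.comul a)).symm

lemma comul_comp_antipode_convMul_includeLeft :
    toConv (Coalgebra.comul (R := k) (A := A) ∘ₗ antipode k) *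
        toConv (Algebra.TensorProduct.includeLeft (S := k)).toLinearMap =
      toConv ((Algebra.TensorProduct.includeRight (R := k) (A := A)).toLinearMap ∘ₗ
        antipode k) := by
  set Δ' := toConv (Coalgebra.comul (R := k) (A := A) ∘ₗ antipode k)
  set ι₁ := toConv (Algebra.TensorProduct.includeLeft (S := k) (R := k) (A := A) (B := A)).toLinearMap
  set ι₂ := toConv (Algebra.TensorProduct.includeRight (R := k) (A := A) (B := A)).toLinearMap
  set ι₂' := toConv ((Algebra.TensorProduct.includeRight (R := k) (A := A) (B := A)).toLinearMap ∘ₗ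
    antipode k)
  have hΔ : Δ' * (ι₁ * ι₂) = 1 := by
    rw [← toConv_comul_eq_includeLeft_convMul_includeRight]
    exact (Bialgebra.comulAlgHom k A).comp_antipode_convMul_self
  have hι₂ : ι₂ * ι₂' = 1 := AlgHom.self_convMul_comp_antipode _
  calc Δ' * ι₁ = Δ' * ι₁ * (ι₂ * ι₂') := by rw [hι₂, mul_one]
    _ = ι₂' := by rw [← mul_assoc, mul_assoc Δ', hΔ, one_mul]

end HopfAlgebra

namespace HopfModule

variable {k A M : Type*} [CommSemiring k] [AddCommMonoid A] [Module k A] [One A]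
  [AddCommMonoid M] [Module k M]

def coinvariants (ρ : M →ₗ[k] A ⊗[k] M) : Submodule k M :=
  LinearMap.eqLocus ρ (TensorProduct.mk k A M 1)

lemma mem_coinvariants {ρ : M →ₗ[k] A ⊗[k] M} {m : M} : m ∈ coinvariants ρ ↔ ρ m = 1 ⊗ₜ m :=
  Iff.rfl

end HopfModule

section

variable (k A M : Type*) [Field k] [Ring A] [HopfAlgebra k A]
  [AddCommGroup M] [Module k M] [Module A M] [IsScalarTower k A M]

/-- The `A`-action on `M` as a `k`-bilinear map. -/
noncomputable def actionBilin : A →ₗ[k] M →ₗ[k] M where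
  toFun a :=
    { toFun := fun m => a • m
      map_add' := fun m m' => smul_add a m m'
      map_smul' := fun c m => by
        simp only [RingHom.id_apply]
        rw [← algebraMap_smul A c m, ← mul_smul, ← Algebra.commutes, mul_smul,
          algebraMap_smul] }
  map_add' a b := LinearMap.ext fun m => add_smul a b m
  map_smul' c a := LinearMap.ext fun m => smul_assoc c a m

/-- The action map `A ⊗[k] M →ₗ[k] M`. -/
noncomputable def actionHom : A ⊗[k] M →ₗ[k] M :=
  TensorProduct.lift (actionBilin k A M)

/-- The action of `A ⊗[k] A` on `A ⊗[k] M`, determined by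
`(x ⊗ y) · (b ⊗ m) = (x * b) ⊗ (y • m)`. -/
noncomputable def bigAction : (A ⊗[k] A) ⊗[k] (A ⊗[k] M) →ₗ[k] A ⊗[k] M :=
  (TensorProduct.map (LinearMap.mul' k A) (actionHom k A M)).comp
    (TensorProduct.tensorTensorTensorComm k A A A M).toLinearMap

namespace HopfModule

open Coalgebra HopfAlgebra Algebra.TensorProduct

variable {k A M}

@[simp] lemma actionBilin_apply (a : A) (m : M) : actionBilin k A M a m = a • m := rfl

@[simp] lemma actionHom_tmul (a : A) (m : M) : actionHom k A M (a ⊗ₜ m) = a • m := rfl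

lemma bigAction_tmul_tmul (X : A ⊗[k] A) (b : A) (n : M) :
    bigAction k A M (X ⊗ₜ (b ⊗ₜ n)) =
      ((actionBilin k A M).flip n).lTensor A (X * (b ⊗ₜ 1)) := by
  induction X with
  | zero => simp
  | tmul x y => simp [bigAction]
  | add X Y hX hY => simp [add_tmul, add_mul, hX, hY]

/-- In Sweedler notation: `∑ Δ(S a₍₁₎) · (a₍₂₎ ⊗ n) = 1 ⊗ S a • n`. -/
lemma bigAction_rTensor_comul_antipode_assoc (x : A ⊗[k] M) :
    bigAction k A M ((comul ∘ₗ antipode k).rTensor (A ⊗[k] M)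
        (TensorProduct.assoc k A A M (comul.rTensor M x))) =
      1 ⊗ₜ actionHom k A M ((antipode k).rTensor M x) := by
  have h (t : A ⊗[k] A) (n : M) :
      bigAction k A M ((comul ∘ₗ antipode k).rTensor (A ⊗[k] M)
        (TensorProduct.assoc k A A M (t ⊗ₜ n))) =
        ((actionBilin k A M).flip n).lTensor A
          (LinearMap.mul' k (A ⊗[k] A) (map (comul ∘ₗ antipode k) includeLeft.toLinearMap t)) := by
    induction t with
    | zero => simp
    | tmul x y => simp [bigAction_tmul_tmul]
    | add X Y hX hY => simp only [add_tmul, map_add, hX, hY]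
  induction x with
  | zero => simp
  | tmul a n =>
    have hK := congr($(comul_comp_antipode_convMul_includeLeft (k := k) (A := A)) a)
    simp only [LinearMap.convMul_apply] at hK
    simp only [LinearMap.rTensor_tmul, h, hK]
    simp
  | add x y hx hy => simp only [map_add, hx, hy, tmul_add]

/-- In Sweedler notation: `∑ a₍₁₎ • S a₍₂₎ • n = ε a • n`. -/
lemma actionHom_lTensor_antipode_assoc (x : A ⊗[k] M) :
    actionHom k A M ((actionHom k A M ∘ₗ (antipode k).rTensor M).lTensor A
        (TensorProduct.assoc k A A M (comul.rTensor M x))) =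
      TensorProduct.lid k M (counit.rTensor M x) := by
  have h (t : A ⊗[k] A) (n : M) :
      actionHom k A M ((actionHom k A M ∘ₗ (antipode k).rTensor M).lTensor A
        (TensorProduct.assoc k A A M (t ⊗ₜ n))) =
        LinearMap.mul' k A ((antipode k).lTensor A t) • n := by
    induction t with
    | zero => simp
    | tmul x y => simp [mul_smul]
    | add X Y hX hY => simp only [add_tmul, map_add, hX, hY, add_smul]
  induction x with
  | zero => simp
  | tmul a n => simp [h, mul_antipode_lTensor_comul_apply]
  | add x y hx hy => simp only [map_add, hx, hy]

variable (ρ : M →ₗ[k] A ⊗[k] M)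

noncomputable def coinvariantProj : M →ₗ[k] M :=
  actionHom k A M ∘ₗ (antipode k).rTensor M ∘ₗ ρ

variable {ρ}
  (hcoassoc : ∀ m : M, TensorProduct.assoc k A A M (map comul LinearMap.id (ρ m)) =
    map LinearMap.id ρ (ρ m))
  (hcounit : ∀ m : M, TensorProduct.lid k M (map counit LinearMap.id (ρ m)) = m)
  (hcompat : ∀ (a : A) (m : M), ρ (a • m) = bigAction k A M (comul a ⊗ₜ[k] ρ m))

include hcompat in
lemma rho_actionHom (x : A ⊗[k] M) :
    ρ (actionHom k A M x) = bigAction k A M (map comul ρ x) := by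
  induction x with
  | zero => simp
  | tmul a m => exact hcompat a m
  | add x y hx hy => simp only [map_add, hx, hy]

include hcompat in
lemma rho_smul_of_mem_coinvariants {n : M} (hn : n ∈ coinvariants ρ) (a : A) :
    ρ (a • n) = ((actionBilin k A M).flip n).lTensor A (comul a) := by
  rw [hcompat, mem_coinvariants.1 hn, bigAction_tmul_tmul, ← Algebra.TensorProduct.one_def,
    mul_one]

include hcompat in
lemma coinvariantProj_smul_of_mem_coinvariants {n : M} (hn : n ∈ coinvariants ρ) (a : A) :
    coinvariantProj ρ (a • n) = counit (R := k) a • n := by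
  have hmul : actionHom k A M ∘ₗ (antipode k).rTensor M ∘ₗ
      ((actionBilin k A M).flip n).lTensor A =
      (actionBilin k A M).flip n ∘ₗ LinearMap.mul' k A ∘ₗ (antipode k).rTensor A :=
    TensorProduct.ext' fun x y => by simp [mul_smul]
  have h := LinearMap.congr_fun hmul (comul a)
  simp only [LinearMap.comp_apply] at h
  simp [coinvariantProj, rho_smul_of_mem_coinvariants hcompat hn, h,
    mul_antipode_rTensor_comul_apply]

include hcoassoc hcompat in
lemma coinvariantProj_mem_coinvariants (m : M) : coinvariantProj ρ m ∈ coinvariants ρ := by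
  have hmap : map comul ρ ∘ₗ (antipode k).rTensor M =
      (comul ∘ₗ antipode k).rTensor (A ⊗[k] M) ∘ₗ ρ.lTensor A :=
    TensorProduct.ext' fun _ _ => rfl
  rw [mem_coinvariants, coinvariantProj, LinearMap.comp_apply, LinearMap.comp_apply,
    rho_actionHom hcompat, ← LinearMap.comp_apply (map comul ρ), hmap, LinearMap.comp_apply,
    show ρ.lTensor A (ρ m) = _ from (hcoassoc m).symm]
  exact bigAction_rTensor_comul_antipode_assoc (ρ m)

include hcoassoc hcounit in
lemma actionHom_lTensor_coinvariantProj (m : M) :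
    actionHom k A M ((coinvariantProj ρ).lTensor A (ρ m)) = m := by
  have hE : coinvariantProj ρ = (actionHom k A M ∘ₗ (antipode k).rTensor M) ∘ₗ ρ := rfl
  rw [hE, LinearMap.lTensor_comp, LinearMap.comp_apply,
    show ρ.lTensor A (ρ m) = _ from (hcoassoc m).symm]
  exact (actionHom_lTensor_antipode_assoc _).trans (hcounit m)

noncomputable def toCoinvariants : M →ₗ[k] coinvariants ρ :=
  (coinvariantProj ρ).codRestrict _ (coinvariantProj_mem_coinvariants hcoassoc hcompat)

lemma lTensor_toCoinvariants_rho_smul {n : M} (hn : n ∈ coinvariants ρ) (a : A) :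
    (toCoinvariants hcoassoc hcompat).lTensor A (ρ (a • n)) = a ⊗ₜ ⟨n, hn⟩ := by
  have h : toCoinvariants hcoassoc hcompat ∘ₗ (actionBilin k A M).flip n =
      LinearMap.toSpanSingleton k _ ⟨n, hn⟩ ∘ₗ counit :=
    LinearMap.ext fun b => Subtype.ext (coinvariantProj_smul_of_mem_coinvariants hcompat hn b)
  rw [rho_smul_of_mem_coinvariants hcompat hn, ← LinearMap.comp_apply, ← LinearMap.lTensor_comp,
    h, LinearMap.lTensor_comp, LinearMap.comp_apply, lTensor_counit_comul]
  simp

noncomputable def coinvariantsEquiv : A ⊗[k] coinvariants ρ ≃ₗ[A] M where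
  toFun := actionHom k A M ∘ₗ (coinvariants ρ).subtype.lTensor A
  map_add' := map_add _
  map_smul' a x := by
    induction x with
    | zero => simp
    | tmul b n => simp [smul_tmul', mul_smul]
    | add x y hx hy => simp_all
  invFun := (toCoinvariants hcoassoc hcompat).lTensor A ∘ₗ ρ
  left_inv x := by
    induction x with
    | zero => simp
    | tmul a n => simpa using lTensor_toCoinvariants_rho_smul hcoassoc hcompat n.2 a
    | add x y hx hy => simp_all
  right_inv m := by
    change actionHom k A M (((coinvariants ρ).subtype.lTensor A ∘ₗ
      (toCoinvariants hcoassoc hcompat).lTensor A) (ρ m)) = m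
    rw [← LinearMap.lTensor_comp]
    exact actionHom_lTensor_coinvariantProj hcoassoc hcounit m

end HopfModule

/-- A left Hopf module over a Hopf algebra `A` over a field `k` is free as a left
`A`-module. -/
theorem hopfModule_free (ρ : M →ₗ[k] A ⊗[k] M)
    (hcoassoc : ∀ m : M,
      (TensorProduct.assoc k A A M)
          ((TensorProduct.map Coalgebra.comul LinearMap.id) (ρ m)) =
        (TensorProduct.map LinearMap.id ρ) (ρ m))
    (hcounit : ∀ m : M,
      (TensorProduct.lid k M)
          ((TensorProduct.map Coalgebra.counit LinearMap.id) (ρ m)) = m)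
    (hcompat : ∀ (a : A) (m : M),
      ρ (a • m) = bigAction k A M (Coalgebra.comul a ⊗ₜ[k] ρ m)) :
    Module.Free A M :=
  Module.Free.of_equiv (HopfModule.coinvariantsEquiv hcoassoc hcounit hcompat)

end
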